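/- Let k ⊂ k_Δ ⊂ k_D be finite fields with [k_D : k_Δ] = 2, G = GL_2(k_Δ), B its upper triangular Borel subgroup, and K = { u·[[1,0],[w,1]] : u ∈ k_Δ^×, w ∈ k_Δ } the subgroup of lower triangular matrices with equal diagonal entries. Let χ_1, χ_2 be characters of k_Δ^×. Then ⟨χ_{Ind_B^G(χ_1⊗χ_2)}, 1⟩_K = (2/(|k_Δ|-1)) · Σ_{u ∈ k_Δ^×} χ_1(u) χ_2(u). In particular this inner product equals 2 if χ_1·χ_2 is trivial on k_Δ^×, and 0 otherwise. -/

import Mathlib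

/-!
For `g = u·[[1,0],[w,1]]` and `x = [[a,b],[c,d]] ∈ GL₂`, the conjugate is
`x⁻¹ g x = u·(1 + (w / det x)·[[-ab, -b²], [a², ab]])`. So `x⁻¹ g x ∈ B` iff `a = 0` or `w = 0`,
and then its diagonal is `(u, u)`. Hence `χ_Ind(g) = χ₁(u)χ₂(u)·|G|/|B| = (Q + 1)·χ₁(u)χ₂(u)`
when `w = 0`, while for `w ≠ 0` only the `x` with `a = 0` contribute, and swapping the rows
matches these with `B`, giving `χ_Ind(g) = χ₁(u)χ₂(u)`. Summing over `w` gives `2Q·χ₁(u)χ₂(u)`,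
and by orthogonality the sum of the character `χ₁χ₂` over `k_Δ^×` is `Q - 1` or `0`.
-/

open Classical

namespace MulChar

section Units

variable {M R : Type*} [CommMonoid M] [Fintype Mˣ] [CommRing R] [IsDomain R]

theorem sum_units_eq_zero_of_ne_one {χ : MulChar M R} (hχ : χ ≠ 1) : ∑ u : Mˣ, χ u = 0 := by
  obtain ⟨b, hb⟩ := ne_one_iff.mp hχ
  refine eq_zero_of_mul_eq_self_left hb ?_
  simpa only [Finset.mul_sum, ← map_mul, Units.val_mul] using
    (Group.mulLeft_bijective b).sum_comp fun u : Mˣ => χ (u : M)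

theorem sum_units_eq_ite (χ : MulChar M R) :
    ∑ u : Mˣ, χ u = if χ = 1 then (Fintype.card Mˣ : R) else 0 := by
  split_ifs with hχ
  · simp [hχ]
  · exact sum_units_eq_zero_of_ne_one hχ

end Units

theorem mul_eq_one_iff_forall_ne_zero {K R : Type*} [Field K] [CommMonoidWithZero R]
    (χ₁ χ₂ : MulChar K R) : χ₁ * χ₂ = 1 ↔ ∀ v : K, v ≠ 0 → χ₁ v * χ₂ v = 1 := by
  simp only [eq_one_iff, coeToFun_mul, Pi.mul_apply]
  exact ⟨fun h v hv => h (Units.mk0 v hv), fun h u => h u u.ne_zero⟩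

theorem sum_units_mul_eq_ite {K R : Type*} [Field K] [Fintype K] [DecidableEq K]
    [CommRing R] [IsDomain R] (χ₁ χ₂ : MulChar K R) :
    ∑ u : Kˣ, χ₁ u * χ₂ u =
      if ∀ v : K, v ≠ 0 → χ₁ v * χ₂ v = 1 then (Fintype.card K : R) - 1 else 0 := by
  simpa only [coeToFun_mul, Pi.mul_apply, mul_eq_one_iff_forall_ne_zero, Fintype.card_units,
    Nat.cast_sub Fintype.card_pos, Nat.cast_one] using (χ₁ * χ₂).sum_units_eq_ite

end MulChar

section GL2

open Matrix

variable {K : Type*} [Field K]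

theorem coe_conj_smul_lowerUnipotent (x g : GL (Fin 2) K) (u w : K)
    (hg : (g : Matrix (Fin 2) (Fin 2) K) = u • !![1, 0; w, 1]) :
    ((x⁻¹ * g * x : GL (Fin 2) K) : Matrix (Fin 2) (Fin 2) K) =
      u • (1 + (w / det (x : Matrix (Fin 2) (Fin 2) K)) •
        !![-(x 0 0 * x 0 1), -(x 0 1 ^ 2); x 0 0 ^ 2, x 0 0 * x 0 1]) := by
  have hdet := x.det_ne_zero
  rw [det_fin_two] at hdet ⊢
  rw [Units.val_mul, Units.val_mul, coe_units_inv, hg, inv_def, adjugate_fin_two,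
    Ring.inverse_eq_inv']
  ext i j
  fin_cases i <;> fin_cases j <;>
    simp [Matrix.mul_apply, Fin.sum_univ_two, det_fin_two] <;> field_simp <;> ring

theorem apply_diag_ne_zero_of_apply_one_zero {b : GL (Fin 2) K}
    (hb : (b : Matrix (Fin 2) (Fin 2) K) 1 0 = 0) :
    (b : Matrix (Fin 2) (Fin 2) K) 0 0 ≠ 0 ∧ (b : Matrix (Fin 2) (Fin 2) K) 1 1 ≠ 0 := by
  have hdet := b.det_ne_zero
  rw [det_fin_two, hb, mul_zero, sub_zero] at hdet
  exact ⟨left_ne_zero_of_mul hdet, right_ne_zero_of_mul hdet⟩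

variable {R : Type*} [Field R] [DecidableEq K]

def borelChar (χ₁ χ₂ : MulChar K R) (g : GL (Fin 2) K) : R :=
  if (g : Matrix (Fin 2) (Fin 2) K) 1 0 = 0 then
    χ₁ ((g : Matrix (Fin 2) (Fin 2) K) 0 0) * χ₂ ((g : Matrix (Fin 2) (Fin 2) K) 1 1)
  else 0

theorem borelChar_conj_smul_lowerUnipotent (χ₁ χ₂ : MulChar K R) (x g : GL (Fin 2) K) (u : Kˣ)
    (w : K) (hg : (g : Matrix (Fin 2) (Fin 2) K) = (u : K) • !![1, 0; w, 1]) :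
    borelChar χ₁ χ₂ (x⁻¹ * g * x) =
      if (x : Matrix (Fin 2) (Fin 2) K) 0 0 = 0 ∨ w = 0 then χ₁ u * χ₂ u else 0 := by
  rw [borelChar, coe_conj_smul_lowerUnipotent x g u w hg]
  by_cases h : (x : Matrix (Fin 2) (Fin 2) K) 0 0 = 0 ∨ w = 0
  · rcases h with h | h <;> simp [h]
  · rw [not_or] at h
    simp [h.1, h.2, x.det_ne_zero]

variable (K) [Fintype K]

def borelFinset : Finset (GL (Fin 2) K) :=
  Finset.univ.filter fun b => (b : Matrix (Fin 2) (Fin 2) K) 1 0 = 0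

noncomputable def borelEquiv :
    {b : GL (Fin 2) K // (b : Matrix (Fin 2) (Fin 2) K) 1 0 = 0} ≃ Kˣ × Kˣ × K where
  toFun b := (Units.mk0 _ (apply_diag_ne_zero_of_apply_one_zero b.2).1,
    Units.mk0 _ (apply_diag_ne_zero_of_apply_one_zero b.2).2, (b.1 : Matrix (Fin 2) (Fin 2) K) 0 1)
  invFun p := ⟨GeneralLinearGroup.mkOfDetNeZero !![(p.1 : K), p.2.2; 0, (p.2.1 : K)]
    (by simp [det_fin_two]), rfl⟩
  left_inv b := by
    ext i j
    fin_cases i <;> fin_cases j <;> simp [GeneralLinearGroup.mkOfDetNeZero, b.2.symm]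
  right_inv p := by ext <;> rfl

theorem card_borelFinset :
    (borelFinset K).card = (Fintype.card K - 1) ^ 2 * Fintype.card K := by
  rw [borelFinset, ← Fintype.card_subtype, Fintype.card_congr (borelEquiv K)]
  simp [Fintype.card_units, sq, mul_assoc]

theorem card_GL_two_eq_mul_card_borelFinset :
    Fintype.card (GL (Fin 2) K) = (Fintype.card K + 1) * (borelFinset K).card := by
  have hq : 1 ≤ Fintype.card K := Fintype.card_pos
  rw [← Nat.card_eq_fintype_card, card_GL_field, card_borelFinset, Fin.prod_univ_two]
  simp only [Fin.val_zero, Fin.val_one, pow_zero, pow_one]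
  have h1 : 1 ≤ Fintype.card K ^ 2 := Nat.one_le_pow _ _ hq
  have h2 : Fintype.card K ≤ Fintype.card K ^ 2 := Nat.le_self_pow two_ne_zero _
  zify [hq, h1, h2]
  ring

theorem card_filter_apply_zero_zero_eq_card_borelFinset :
    (Finset.univ.filter fun x : GL (Fin 2) K => (x : Matrix (Fin 2) (Fin 2) K) 0 0 = 0).card =
      (borelFinset K).card := by
  let s : GL (Fin 2) K := GeneralLinearGroup.mkOfDetNeZero !![0, 1; 1, 0] (by simp)
  refine Finset.card_equiv (Equiv.mulLeft s) fun x => ?_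
  simp [borelFinset, s, GeneralLinearGroup.mkOfDetNeZero, Matrix.mul_apply]

variable {K}

/-- The character of `Ind_B^G(χ₁ ⊗ χ₂)`, by the Frobenius formula. -/
def inducedChar (χ₁ χ₂ : MulChar K R) (g : GL (Fin 2) K) : R :=
  (1 / ((borelFinset K).card : R)) * ∑ x, borelChar χ₁ χ₂ (x⁻¹ * g * x)

variable [CharZero R]

theorem inducedChar_smul_lowerUnipotent (χ₁ χ₂ : MulChar K R) (g : GL (Fin 2) K) (u : Kˣ)
    (w : K) (hg : (g : Matrix (Fin 2) (Fin 2) K) = (u : K) • !![1, 0; w, 1]) :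
    inducedChar χ₁ χ₂ g = (if w = 0 then (Fintype.card K + 1 : R) else 1) * (χ₁ u * χ₂ u) := by
  have hB : ((borelFinset K).card : R) ≠ 0 :=
    Nat.cast_ne_zero.2 (Finset.card_ne_zero.2 ⟨1, by simp [borelFinset]⟩)
  simp only [inducedChar, borelChar_conj_smul_lowerUnipotent χ₁ χ₂ _ g u w hg]
  by_cases hw : w = 0
  · simp only [hw, or_true, if_true, Finset.sum_const, Finset.card_univ, nsmul_eq_mul,
      card_GL_two_eq_mul_card_borelFinset, Nat.cast_mul, Nat.cast_add, Nat.cast_one]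
    field_simp
  · simp only [hw, or_false, if_false, Finset.sum_ite, Finset.sum_const_zero, add_zero,
      Finset.sum_const, nsmul_eq_mul, card_filter_apply_zero_zero_eq_card_borelFinset]
    field_simp

theorem sum_inducedChar_smul_lowerUnipotent (χ₁ χ₂ : MulChar K R) (m : Kˣ → K → GL (Fin 2) K)
    (hm : ∀ u w, (m u w : Matrix (Fin 2) (Fin 2) K) = (u : K) • !![1, 0; w, 1]) (u : Kˣ) :
    ∑ w, inducedChar χ₁ χ₂ (m u w) = 2 * Fintype.card K * (χ₁ u * χ₂ u) := by
  have hsplit : ∀ w : K, (if w = 0 then (Fintype.card K + 1 : R) else 1) =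
      1 + if w = 0 then (Fintype.card K : R) else 0 := fun w => by split_ifs <;> ring
  simp only [inducedChar_smul_lowerUnipotent χ₁ χ₂ _ u _ (hm u _), ← Finset.sum_mul, hsplit,
    Finset.sum_add_distrib, Finset.sum_ite_eq', Finset.mem_univ, if_true, Finset.sum_const,
    Finset.card_univ, nsmul_eq_mul, mul_one]
  ring

end GL2

theorem stmt_13_general (kΔ : Type*) [Field kΔ]
    [Fintype kΔ] [DecidableEq kΔ]
    (Q : ℕ) (hQ : Fintype.card kΔ = Q)
    (χ₁ χ₂ : MulChar kΔ ℂ)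
    (m : kΔˣ → kΔ → Matrix.GeneralLinearGroup (Fin 2) kΔ)
    (hm : ∀ (u : kΔˣ) (w : kΔ),
      (↑(m u w) : Matrix (Fin 2) (Fin 2) kΔ) = (u : kΔ) • !![1, 0; w, 1]) :
    (1 / (((Q : ℂ) - 1) * (Q : ℂ))) * (∑ u : kΔˣ, ∑ w : kΔ,
      ((1 : ℂ) / ((Finset.univ.filter fun b : Matrix.GeneralLinearGroup (Fin 2) kΔ =>
          (↑b : Matrix (Fin 2) (Fin 2) kΔ) 1 0 = 0).card : ℂ)) *
        ∑ x : Matrix.GeneralLinearGroup (Fin 2) kΔ,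
          (if (↑(x⁻¹ * m u w * x) : Matrix (Fin 2) (Fin 2) kΔ) 1 0 = 0 then
            χ₁ ((↑(x⁻¹ * m u w * x) : Matrix (Fin 2) (Fin 2) kΔ) 0 0) *
              χ₂ ((↑(x⁻¹ * m u w * x) : Matrix (Fin 2) (Fin 2) kΔ) 1 1)
          else 0)) =
      (2 / ((Q : ℂ) - 1)) * ∑ u : kΔˣ, χ₁ (u : kΔ) * χ₂ (u : kΔ) ∧
    (1 / (((Q : ℂ) - 1) * (Q : ℂ))) * (∑ u : kΔˣ, ∑ w : kΔ,
      ((1 : ℂ) / ((Finset.univ.filter fun b : Matrix.GeneralLinearGroup (Fin 2) kΔ =>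
          (↑b : Matrix (Fin 2) (Fin 2) kΔ) 1 0 = 0).card : ℂ)) *
        ∑ x : Matrix.GeneralLinearGroup (Fin 2) kΔ,
          (if (↑(x⁻¹ * m u w * x) : Matrix (Fin 2) (Fin 2) kΔ) 1 0 = 0 then
            χ₁ ((↑(x⁻¹ * m u w * x) : Matrix (Fin 2) (Fin 2) kΔ) 0 0) *
              χ₂ ((↑(x⁻¹ * m u w * x) : Matrix (Fin 2) (Fin 2) kΔ) 1 1)
          else 0)) =
      if ∀ v : kΔ, v ≠ 0 → χ₁ v * χ₂ v = 1 then 2 else 0 := by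
  subst hQ
  have hq : (Fintype.card kΔ : ℂ) - 1 ≠ 0 :=
    sub_ne_zero.2 (Nat.cast_ne_one.2 Fintype.one_lt_card.ne')
  have hmain : 1 / ((Fintype.card kΔ - 1) * Fintype.card kΔ) *
      ∑ u : kΔˣ, ∑ w, inducedChar χ₁ χ₂ (m u w) =
      2 / ((Fintype.card kΔ : ℂ) - 1) * ∑ u : kΔˣ, χ₁ u * χ₂ u := by
    simp only [sum_inducedChar_smul_lowerUnipotent χ₁ χ₂ m hm, ← Finset.mul_sum]
    field_simp
  -- the left-hand side of the statement is `hmain`'s with `inducedChar` unfolded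
  refine ⟨hmain, hmain.trans ?_⟩
  rw [MulChar.sum_units_mul_eq_ite]
  split_ifs
  · exact div_mul_cancel₀ 2 hq
  · exact mul_zero _

/-- Let `k ⊆ k_Δ ⊆ k_D` be finite fields with `[k_D : k_Δ] = 2`, `G = GL₂(k_Δ)`,
`B` its upper triangular Borel (matrices with `(1,0)`-entry zero) and
`K' = { u·[[1,0],[w,1]] : u ∈ k_Δ^×, w ∈ k_Δ }`.  For characters `χ₁, χ₂` of
`k_Δ^×`, the inner product over `K'` of the character of `Ind_B^G(χ₁⊗χ₂)` with
the trivial character equals `(2/(Q-1))·∑_{u ∈ k_Δ^×} χ₁(u)χ₂(u)`; in particular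
it equals `2` if `χ₁·χ₂` is trivial on `k_Δ^×` and `0` otherwise. -/
theorem stmt_13 (k kΔ kD : Type*) [Field k] [Field kΔ] [Field kD]
    [Algebra k kΔ] [Algebra kΔ kD] [Algebra k kD] [IsScalarTower k kΔ kD]
    [Fintype k] [Fintype kΔ] [Fintype kD] [DecidableEq kΔ]
    (hdim : Module.finrank kΔ kD = 2)
    (Q : ℕ) (hQ : Fintype.card kΔ = Q)
    (χ₁ χ₂ : MulChar kΔ ℂ)
    (m : kΔˣ → kΔ → Matrix.GeneralLinearGroup (Fin 2) kΔ)
    (hm : ∀ (u : kΔˣ) (w : kΔ),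
      (↑(m u w) : Matrix (Fin 2) (Fin 2) kΔ) = (u : kΔ) • !![1, 0; w, 1]) :
    (1 / (((Q : ℂ) - 1) * (Q : ℂ))) * (∑ u : kΔˣ, ∑ w : kΔ,
      ((1 : ℂ) / ((Finset.univ.filter fun b : Matrix.GeneralLinearGroup (Fin 2) kΔ =>
          (↑b : Matrix (Fin 2) (Fin 2) kΔ) 1 0 = 0).card : ℂ)) *
        ∑ x : Matrix.GeneralLinearGroup (Fin 2) kΔ,
          (if (↑(x⁻¹ * m u w * x) : Matrix (Fin 2) (Fin 2) kΔ) 1 0 = 0 then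
            χ₁ ((↑(x⁻¹ * m u w * x) : Matrix (Fin 2) (Fin 2) kΔ) 0 0) *
              χ₂ ((↑(x⁻¹ * m u w * x) : Matrix (Fin 2) (Fin 2) kΔ) 1 1)
          else 0)) =
      (2 / ((Q : ℂ) - 1)) * ∑ u : kΔˣ, χ₁ (u : kΔ) * χ₂ (u : kΔ) ∧
    (1 / (((Q : ℂ) - 1) * (Q : ℂ))) * (∑ u : kΔˣ, ∑ w : kΔ,
      ((1 : ℂ) / ((Finset.univ.filter fun b : Matrix.GeneralLinearGroup (Fin 2) kΔ =>
          (↑b : Matrix (Fin 2) (Fin 2) kΔ) 1 0 = 0).card : ℂ)) *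
        ∑ x : Matrix.GeneralLinearGroup (Fin 2) kΔ,
          (if (↑(x⁻¹ * m u w * x) : Matrix (Fin 2) (Fin 2) kΔ) 1 0 = 0 then
            χ₁ ((↑(x⁻¹ * m u w * x) : Matrix (Fin 2) (Fin 2) kΔ) 0 0) *
              χ₂ ((↑(x⁻¹ * m u w * x) : Matrix (Fin 2) (Fin 2) kΔ) 1 1)
          else 0)) =
      if ∀ v : kΔ, v ≠ 0 → χ₁ v * χ₂ v = 1 then 2 else 0 :=
  stmt_13_general kΔ Q hQ χ₁ χ₂ m hm
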